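/- arXiv:0806.0169 — 6 statements merged into one kernel-verified Lean document; each statement's English description precedes it below -/
import Mathlib

section
/- For every positive integer n, the sum of k! for k from 1 to n is at most 3·(n+1)·(n+1)!/(n² + 3n + 5). -/
/-!
Chebyshev's sum inequality for the two increasing sequences `k² + k + 1` and `k!` on `1, …, n`
bounds `n · ∑ k!` by the product of `∑ (k² + k + 1) = n (n² + 3n + 5) / 3` with
`∑ (k² + k + 1) k!`, and the latter telescopes to `(n + 1) (n + 1)! - 1`.
-/

open Finset Nat

theorem three_mul_sum_Icc_sq_add_add_one (n : ℕ) :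
    3 * ∑ k ∈ Icc 1 n, ((k : ℝ) ^ 2 + k + 1) = (n : ℝ) * (n ^ 2 + 3 * n + 5) := by
  induction n with
  | zero => simp
  | succ n ih =>
    rw [sum_Icc_succ_top (by omega), mul_add, ih]
    push_cast
    ring

/-- The summand is `(k + 1) (k + 1)! - k k!`, so the sum telescopes. -/
theorem sum_Icc_sq_add_add_one_mul_factorial (n : ℕ) :
    ∑ k ∈ Icc 1 n, ((k : ℝ) ^ 2 + k + 1) * k ! + 1 = ((n : ℝ) + 1) * (n + 1)! := by
  induction n with
  | zero => simp
  | succ n ih =>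
    rw [sum_Icc_succ_top (by omega), add_right_comm, ih, factorial_succ (n + 1)]
    push_cast
    ring

theorem stmt_4 (n : ℕ) (hn : 1 ≤ n) :
    ∑ k ∈ Finset.Icc 1 n, (Nat.factorial k : ℝ)
      ≤ 3 * (n + 1) * (Nat.factorial (n + 1) : ℝ) / (n ^ 2 + 3 * n + 5) := by
  have chebyshev :
      (∑ k ∈ Icc 1 n, ((k : ℝ) ^ 2 + k + 1)) * ∑ k ∈ Icc 1 n, (k ! : ℝ)
        ≤ n * ∑ k ∈ Icc 1 n, ((k : ℝ) ^ 2 + k + 1) * k ! := by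
    have hmono : Monovary (fun k : ℕ ↦ (k : ℝ) ^ 2 + k + 1) (fun k ↦ (k ! : ℝ)) :=
      Monotone.monovary (fun a b hab ↦ by gcongr) fun a b hab ↦ by gcongr
    simpa using (hmono.monovaryOn (Icc 1 n)).sum_mul_sum_le_card_mul_sum
  have hn' : (0 : ℝ) < n := by exact_mod_cast hn
  rw [le_div_iff₀ (by positivity)]
  refine le_of_mul_le_mul_left ?_ hn'
  calc (n : ℝ) * ((∑ k ∈ Icc 1 n, (k ! : ℝ)) * (n ^ 2 + 3 * n + 5))
      = 3 * (∑ k ∈ Icc 1 n, ((k : ℝ) ^ 2 + k + 1)) * ∑ k ∈ Icc 1 n, (k ! : ℝ) := by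
        rw [three_mul_sum_Icc_sq_add_add_one]; ring
    _ ≤ 3 * (n * ∑ k ∈ Icc 1 n, ((k : ℝ) ^ 2 + k + 1) * k !) := by
        rw [mul_assoc]; gcongr
    _ ≤ n * (3 * (n + 1) * (n + 1)!) := by
        nlinarith [sum_Icc_sq_add_add_one_mul_factorial n]
end

section
/- For every positive integer n, the sum of 1/k! for k from 1 to n is at least n²·(n+1)/(2·((n+1)! - 1)). -/
/-!
By AM–HM (Cauchy–Schwarz), `∑ 1/k! ≥ n² / S` with `S = ∑_{k=1}^n k!`, and induction on `n`
gives `(n + 1) S ≤ 2 ((n + 1)! - 1)`; combining the two yields the bound.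
-/

open Finset Nat

theorem Finset.card_sq_div_sum_le_sum_one_div {ι R : Type*} [Semifield R] [LinearOrder R]
    [IsStrictOrderedRing R] [ExistsAddOfLE R] (s : Finset ι) {g : ι → R}
    (hg : ∀ i ∈ s, 0 < g i) :
    (#s : R) ^ 2 / ∑ i ∈ s, g i ≤ ∑ i ∈ s, 1 / g i := by
  simpa using sq_sum_div_le_sum_sq_div s (fun _ ↦ (1 : R)) hg

theorem sum_Icc_factorial_le_mul_factorial (n : ℕ) : ∑ k ∈ Icc 1 n, k ! ≤ n * n ! :=
  calc ∑ k ∈ Icc 1 n, k ! ≤ ∑ _k ∈ Icc 1 n, n ! :=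
        sum_le_sum fun _ hk ↦ factorial_le (mem_Icc.mp hk).2
    _ = n * n ! := by simp

-- `S ≤ 2 ((n + 1)! - 1) / (n + 1)`, with the subtraction moved across to stay in `ℕ`.
theorem succ_mul_sum_Icc_factorial_add_two_le (n : ℕ) :
    (n + 1) * ∑ k ∈ Icc 1 n, k ! + 2 ≤ 2 * (n + 1)! := by
  induction n with
  | zero => simp
  | succ n ih =>
    have hS : ∑ k ∈ Icc 1 n, k ! ≤ n * (n + 1)! :=
      (sum_Icc_factorial_le_mul_factorial n).trans
        (Nat.mul_le_mul_left n (factorial_le n.le_succ))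
    -- the step needs `(n + 1) S + 2 + S ≤ (n + 2) (n + 1)!`: the hypothesis plus `S ≤ n (n + 1)!`
    rw [sum_Icc_succ_top (by omega), factorial_succ (n + 1)]
    nlinarith [ih, hS]

theorem stmt_5 (n : ℕ) (hn : 1 ≤ n) :
    ∑ k ∈ Finset.Icc 1 n, (1 : ℝ) / Nat.factorial k
      ≥ n ^ 2 * (n + 1) / (2 * ((Nat.factorial (n + 1) : ℝ) - 1)) := by
  have hSle : ((n : ℝ) + 1) * ∑ k ∈ Icc 1 n, (k ! : ℝ) + 2 ≤ 2 * (n + 1)! := by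
    exact_mod_cast succ_mul_sum_Icc_factorial_add_two_le n
  set S : ℝ := ∑ k ∈ Icc 1 n, (k ! : ℝ)
  have hS : 0 < S := sum_pos (fun k _ ↦ by positivity) ⟨1, mem_Icc.mpr ⟨le_rfl, hn⟩⟩
  have hAMHM : (n : ℝ) ^ 2 / S ≤ ∑ k ∈ Icc 1 n, (1 : ℝ) / k ! := by
    simpa using card_sq_div_sum_le_sum_one_div (Icc 1 n) (g := fun k ↦ (k ! : ℝ))
      fun k _ ↦ by positivity
  refine le_trans ?_ hAMHM
  have hnS : 0 < ((n : ℝ) + 1) * S := by positivity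
  rw [div_le_div_iff₀ (by linarith) hS, mul_assoc]
  exact mul_le_mul_of_nonneg_left (by linarith) (by positivity)
end

section
/- For every positive integer n, the sum of 1/k! for k from 1 to n is at least n²·(n² + 3n + 5)/(3·(n+1)·(n+1)!). -/
/-!
Induction on `n`: the right-hand side increases by at most `1 / (n + 1)!` from `n` to `n + 1`.
After clearing denominators this is a polynomial inequality in `n` which, written in `n - 1`,
has only nonnegative coefficients.
-/

open Nat

/-- The step inequality with denominators cleared. It fails for some real `n ∈ (0, 1)`. -/
lemma succ_pow_three_mul_le (n : ℕ) :
    (n + 1) ^ 3 * (n ^ 2 + 5 * n + 9)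
      ≤ n ^ 2 * (n ^ 2 + 3 * n + 5) * (n + 2) ^ 2 + 3 * (n + 1) * (n + 2) ^ 2 := by
  rcases n with _ | m
  · norm_num
  · ring_nf
    nlinarith [Nat.zero_le m, Nat.zero_le (m ^ 2), Nat.zero_le (m ^ 3), Nat.zero_le (m ^ 4),
      Nat.zero_le (m ^ 5)]

noncomputable def invFactorialSumLowerBound (n : ℕ) : ℝ :=
  n ^ 2 * (n ^ 2 + 3 * n + 5) / (3 * (n + 1) * (n + 1)! : ℝ)

lemma invFactorialSumLowerBound_succ_le (n : ℕ) :
    invFactorialSumLowerBound (n + 1) ≤ invFactorialSumLowerBound n + 1 / (n + 1)! := by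
  have hF : (0 : ℝ) < (n + 1)! := by exact_mod_cast factorial_pos _
  have key : ((n : ℝ) + 1) ^ 3 * (n ^ 2 + 5 * n + 9)
      ≤ n ^ 2 * (n ^ 2 + 3 * n + 5) * (n + 2) ^ 2 + 3 * (n + 1) * (n + 2) ^ 2 := by
    exact_mod_cast succ_pow_three_mul_le n
  unfold invFactorialSumLowerBound
  rw [factorial_succ (n + 1), div_add_div _ _ (by positivity) hF.ne',
    div_le_div_iff₀ (by positivity) (by positivity)]
  push_cast
  nlinarith [mul_le_mul_of_nonneg_left key (mul_pos hF hF).le]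

theorem stmt_6_general (n : ℕ) :
    ∑ k ∈ Finset.Icc 1 n, (1 : ℝ) / Nat.factorial k
      ≥ n ^ 2 * (n ^ 2 + 3 * n + 5) / (3 * (n + 1) * (Nat.factorial (n + 1) : ℝ)) := by
  show invFactorialSumLowerBound n ≤ _
  induction n with
  | zero => simp [invFactorialSumLowerBound]
  | succ n ih =>
    rw [Finset.sum_Icc_succ_top (by omega)]
    linarith [invFactorialSumLowerBound_succ_le n]

theorem stmt_6 (n : ℕ) (hn : 1 ≤ n) :
    ∑ k ∈ Finset.Icc 1 n, (1 : ℝ) / Nat.factorial k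
      ≥ n ^ 2 * (n ^ 2 + 3 * n + 5) / (3 * (n + 1) * (Nat.factorial (n + 1) : ℝ)) :=
  stmt_6_general n
end

section
/- For every positive integer n, the sum of (k² + 2k + 2)/(k·(k+1)·(k+2)!) for k from 1 to n equals 1/2 - 1/((n+1)·(n+2)!). -/
open Finset

theorem Finset.sum_Icc_sub_succ {G : Type*} [AddCommGroup G] (t : ℕ → G) {m n : ℕ}
    (hmn : m ≤ n + 1) : ∑ k ∈ Icc m n, (t k - t (k + 1)) = t m - t (n + 1) := by
  rw [← Ico_add_one_right_eq_Icc]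
  simpa only [neg_sub_neg] using sum_Ico_sub (fun k => -t k) hmn

theorem div_mul_succ_mul_factorial_eq_sub {k : ℕ} (hk : 1 ≤ k) :
    ((k : ℝ) ^ 2 + 2 * k + 2) / (k * (k + 1) * (k + 2).factorial)
      = 1 / (k * (k + 1).factorial) - 1 / ((k + 1 : ℕ) * (k + 1 + 1).factorial) := by
  have hk : (k : ℝ) ≠ 0 := Nat.cast_ne_zero.mpr (by omega)
  rw [Nat.factorial_succ (k + 1)]
  push_cast
  field_simp
  ring

theorem stmt_11_general (n : ℕ) :
    ∑ k ∈ Finset.Icc 1 n,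
        ((k : ℝ) ^ 2 + 2 * k + 2) / (k * (k + 1) * Nat.factorial (k + 2))
      = 1 / 2 - 1 / ((n + 1) * (Nat.factorial (n + 2) : ℝ)) := by
  rw [sum_congr rfl fun k hk => div_mul_succ_mul_factorial_eq_sub (mem_Icc.mp hk).1,
    sum_Icc_sub_succ (fun k : ℕ => 1 / ((k : ℝ) * (k + 1).factorial)) (by omega)]
  norm_num

theorem stmt_11 (n : ℕ) (hn : 1 ≤ n) :
    ∑ k ∈ Finset.Icc 1 n,
        ((k : ℝ) ^ 2 + 2 * k + 2) / (k * (k + 1) * Nat.factorial (k + 2))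
      = 1 / 2 - 1 / ((n + 1) * (Nat.factorial (n + 2) : ℝ)) :=
  stmt_11_general n
end

section
/- For every positive integer n, the sum of 1/(4k⁴ + 1) for k from 1 to n is at least n/(2n² + 2n + 1). -/
/-!
Chebyshev's sum inequality for the increasing sequence `4k` and the decreasing sequence
`1 / (4k⁴ + 1)` gives `n ∑ 4k/(4k⁴+1) ≤ (∑ 4k) (∑ 1/(4k⁴+1))`. Here `∑ 4k = 2n(n+1)`, and the
Sophie Germain factorisation `4k⁴ + 1 = (2k² - 2k + 1)(2k² + 2k + 1)` makes `∑ 4k/(4k⁴+1)`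
telescope to `1 - 1/(2n² + 2n + 1)`.
-/

open Finset

lemma four_mul_div_four_mul_pow_four_add_one (x : ℝ) :
    4 * x / (4 * x ^ 4 + 1) =
      1 / (2 * (x - 1) ^ 2 + 2 * (x - 1) + 1) - 1 / (2 * x ^ 2 + 2 * x + 1) := by
  have h₀ : 0 < 4 * x ^ 4 + 1 := by positivity
  have h₁ : 0 < 2 * (x - 1) ^ 2 + 2 * (x - 1) + 1 := by nlinarith [sq_nonneg (2 * x - 1)]
  have h₂ : 0 < 2 * x ^ 2 + 2 * x + 1 := by nlinarith [sq_nonneg (2 * x + 1)]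
  rw [div_sub_div _ _ h₁.ne' h₂.ne', div_eq_div_iff h₀.ne' (by positivity)]
  ring

lemma sum_Icc_four_mul_div_four_mul_pow_four_add_one (n : ℕ) :
    ∑ k ∈ Icc 1 n, 4 * (k : ℝ) / (4 * k ^ 4 + 1) = 1 - 1 / (2 * (n : ℝ) ^ 2 + 2 * n + 1) := by
  induction n with
  | zero => norm_num
  | succ n ih =>
    rw [sum_Icc_succ_top (by omega), ih, four_mul_div_four_mul_pow_four_add_one]
    push_cast
    ring_nf

lemma sum_Icc_four_mul (n : ℕ) : ∑ k ∈ Icc 1 n, 4 * (k : ℝ) = 2 * n * (n + 1) := by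
  induction n with
  | zero => simp
  | succ n ih =>
    rw [sum_Icc_succ_top (by omega), ih]
    push_cast
    ring

lemma antivary_four_mul_one_div_four_mul_pow_four_add_one :
    Antivary (fun k : ℕ ↦ 4 * (k : ℝ)) (fun k : ℕ ↦ 1 / (4 * (k : ℝ) ^ 4 + 1)) := by
  refine Monotone.antivary (fun i j hij ↦ ?_) (fun i j hij ↦ ?_)
  · gcongr
  · gcongr

theorem stmt_14 (n : ℕ) (hn : 1 ≤ n) :
    ∑ k ∈ Finset.Icc 1 n, (1 : ℝ) / (4 * k ^ 4 + 1)
      ≥ n / (2 * (n : ℝ) ^ 2 + 2 * n + 1) := by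
  have chebyshev := (antivary_four_mul_one_div_four_mul_pow_four_add_one.antivaryOn
    (Icc 1 n : Set ℕ)).card_mul_sum_le_sum_mul_sum
  simp only [Nat.card_Icc, add_tsub_cancel_right, mul_one_div,
    sum_Icc_four_mul_div_four_mul_pow_four_add_one, sum_Icc_four_mul] at chebyshev
  have hD : (0 : ℝ) < 2 * n ^ 2 + 2 * n + 1 := by positivity
  have hpos : (0 : ℝ) < 2 * n * (n + 1) := by
    have : (1 : ℝ) ≤ n := by exact_mod_cast hn
    positivity
  rw [ge_iff_le, ← mul_le_mul_iff_right₀ hpos]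
  calc 2 * n * (n + 1) * (n / (2 * (n : ℝ) ^ 2 + 2 * n + 1))
      = n * (1 - 1 / (2 * (n : ℝ) ^ 2 + 2 * n + 1)) := by field_simp; ring
    _ ≤ _ := chebyshev
end

section
/- For every positive integer n, the sum of 1/(4k⁴ - 1) for k from 1 to n is at least 3n/(2n+1)². -/
/-! The first term of the sum is already `1/3`, and `3n/(2n+1)² ≤ 1/3` for every natural `n`,
since `(2n+1)² - 9n = (4n-1)(n-1) ≥ 0`. -/

lemma one_div_four_mul_pow_four_sub_one_nonneg {k : ℕ} (hk : 1 ≤ k) :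
    0 ≤ (1 : ℝ) / (4 * k ^ 4 - 1) := by
  have : (1 : ℝ) ≤ (k : ℝ) ^ 4 := one_le_pow₀ (by exact_mod_cast hk)
  exact div_nonneg zero_le_one (by linarith)

lemma one_third_le_sum_Icc_one_div_four_mul_pow_four_sub_one {n : ℕ} (hn : 1 ≤ n) :
    (1 : ℝ) / 3 ≤ ∑ k ∈ Finset.Icc 1 n, (1 : ℝ) / (4 * k ^ 4 - 1) :=
  calc (1 : ℝ) / 3 = 1 / (4 * ((1 : ℕ) : ℝ) ^ 4 - 1) := by norm_num
    _ ≤ ∑ k ∈ Finset.Icc 1 n, (1 : ℝ) / (4 * k ^ 4 - 1) :=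
      Finset.single_le_sum
        (fun k hk ↦ one_div_four_mul_pow_four_sub_one_nonneg (Finset.mem_Icc.mp hk).1)
        (Finset.mem_Icc.mpr ⟨le_rfl, hn⟩)

lemma three_mul_div_two_mul_add_one_sq_le_one_third (n : ℕ) :
    3 * n / (2 * (n : ℝ) + 1) ^ 2 ≤ 1 / 3 := by
  rw [div_le_div_iff₀ (by positivity) (by norm_num)]
  rcases n with _ | n
  · simp
  · push_cast
    nlinarith

theorem stmt_17 (n : ℕ) (hn : 1 ≤ n) :
    ∑ k ∈ Finset.Icc 1 n, (1 : ℝ) / (4 * k ^ 4 - 1)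
      ≥ 3 * n / (2 * (n : ℝ) + 1) ^ 2 :=
  (three_mul_div_two_mul_add_one_sq_le_one_third n).trans
    (one_third_le_sum_Icc_one_div_four_mul_pow_four_sub_one hn)
end
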